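/- arXiv:2605.03674 — 6 statements merged into one kernel-verified Lean document; each statement's English description precedes it below -/
import Mathlib

section
/- Let Z be a square-integrable real random variable bounded above by b > 0. Then E[e^Z] ≤ exp(E[Z] + (φ(b)/2)·E[Z²]), where φ(u) = (e^u − 1 − u)/(u²/2) for u ≠ 0 and φ(0) = 1. -/
open MeasureTheory Real

noncomputable def phi (u : ℝ) : ℝ := if u = 0 then 1 else 2 * (Real.exp u - 1 - u) / u ^ 2

/-! Since `exp z = 1 + z + φ(z) z² / 2` and `φ` is increasing, `Z ≤ b` gives the pointwise bound
`exp Z ≤ 1 + Z + φ(b) Z² / 2`. Taking expectations and using `1 + x ≤ exp x` finishes the proof.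
That `φ` is increasing on each half-line is a derivative computation: the derivative of `φ` at
`u ≠ 0` is `2 u g(u) / u⁴` with `g(u) = (u - 2) eᵘ + u + 2`, and `g` is increasing with `g(0) = 0`,
so `u g(u) ≥ 0`. Across `0` one uses `φ ≤ 1` on `u ≤ 0` and `1 ≤ φ` on `0 ≤ u`. -/

lemma monotone_exp_sub_one_sub_sub_sq_div_two :
    Monotone fun x : ℝ => exp x - 1 - x - x ^ 2 / 2 := by
  refine monotone_of_deriv_nonneg (by fun_prop) fun x => ?_
  have h : HasDerivAt (fun x : ℝ => exp x - 1 - x - x ^ 2 / 2) (exp x - 1 - x) x := by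
    refine ((((hasDerivAt_exp x).sub_const 1).sub (hasDerivAt_id x)).sub
      ((hasDerivAt_pow 2 x).div_const 2)).congr_deriv ?_
    simp
  rw [h.deriv]
  linarith [add_one_le_exp x]

lemma exp_le_one_add_add_sq_div_two_of_nonpos {x : ℝ} (hx : x ≤ 0) :
    exp x ≤ 1 + x + x ^ 2 / 2 := by
  have := monotone_exp_sub_one_sub_sub_sq_div_two hx
  simp only [exp_zero] at this
  linarith

lemma monotone_sub_two_mul_exp_add_add_two :
    Monotone fun x : ℝ => (x - 2) * exp x + x + 2 := by
  refine monotone_of_deriv_nonneg (by fun_prop) fun x => ?_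
  have h : HasDerivAt (fun x : ℝ => (x - 2) * exp x + x + 2) ((x - 1) * exp x + 1) x := by
    refine (((((hasDerivAt_id x).sub_const 2).mul (hasDerivAt_exp x)).add
      (hasDerivAt_id x)).add_const 2).congr_deriv ?_
    simp only [id]
    ring
  rw [h.deriv]
  have h1 : 1 - x ≤ exp (-x) := by linarith [add_one_le_exp (-x)]
  have h2 : exp (-x) * exp x = 1 := by rw [← exp_add, neg_add_cancel, exp_zero]
  nlinarith [mul_le_mul_of_nonneg_right h1 (exp_pos x).le]

lemma mul_sub_two_mul_exp_add_add_two_nonneg (x : ℝ) :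
    0 ≤ x * ((x - 2) * exp x + x + 2) := by
  rcases le_total 0 x with hx | hx <;>
  · have := monotone_sub_two_mul_exp_add_add_two hx
    simp only [exp_zero] at this
    nlinarith

lemma phi_of_ne_zero {u : ℝ} (hu : u ≠ 0) : phi u = 2 * (exp u - 1 - u) / u ^ 2 :=
  if_neg hu

lemma hasDerivAt_phi {x : ℝ} (hx : x ≠ 0) :
    HasDerivAt phi (2 * (x * ((x - 2) * exp x + x + 2)) / x ^ 4) x := by
  have h : HasDerivAt (fun u => 2 * (exp u - 1 - u) / u ^ 2)
      (2 * (x * ((x - 2) * exp x + x + 2)) / x ^ 4) x := by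
    refine (((((hasDerivAt_exp x).sub_const 1).sub (hasDerivAt_id x)).const_mul 2).div
      (hasDerivAt_pow 2 x) (pow_ne_zero 2 hx)).congr_deriv ?_
    simp only [Pi.sub_apply, id]
    field_simp
    ring
  refine h.congr_of_eventuallyEq ?_
  filter_upwards [isOpen_ne.mem_nhds hx] with u hu
  exact phi_of_ne_zero hu

lemma monotoneOn_phi {s : Set ℝ} (hs : Convex ℝ s) (h0 : 0 ∉ s) :
    MonotoneOn phi s := by
  have hne : ∀ x ∈ s, x ≠ 0 := fun x hx h => h0 (h ▸ hx)
  refine monotoneOn_of_hasDerivWithinAt_nonneg hs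
    (fun x hx => (hasDerivAt_phi (hne x hx)).continuousAt.continuousWithinAt)
    (fun x hx => (hasDerivAt_phi (hne x (interior_subset hx))).hasDerivWithinAt) fun x hx => ?_
  have := mul_sub_two_mul_exp_add_add_two_nonneg x
  positivity

lemma phi_le_one_of_nonpos {u : ℝ} (hu : u ≤ 0) : phi u ≤ 1 := by
  rcases hu.eq_or_lt with rfl | hu
  · simp [phi]
  rw [phi_of_ne_zero hu.ne, div_le_one (sq_pos_of_neg hu)]
  linarith [exp_le_one_add_add_sq_div_two_of_nonpos hu.le]

lemma one_le_phi_of_nonneg {u : ℝ} (hu : 0 ≤ u) : 1 ≤ phi u := by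
  rcases hu.eq_or_lt with rfl | hu
  · simp [phi]
  rw [phi_of_ne_zero hu.ne', one_le_div (by positivity)]
  linarith [quadratic_le_exp_of_nonneg hu.le]

theorem monotone_phi : Monotone phi := by
  intro x y hxy
  by_cases hy : y < 0
  · exact monotoneOn_phi (convex_Iio 0) Set.self_notMem_Iio (hxy.trans_lt hy) hy hxy
  by_cases hx : 0 < x
  · exact monotoneOn_phi (convex_Ioi 0) Set.self_notMem_Ioi hx (hx.trans_le hxy) hxy
  exact (phi_le_one_of_nonpos (not_lt.1 hx)).trans (one_le_phi_of_nonneg (not_lt.1 hy))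

lemma exp_eq_one_add_add_phi_mul_sq (z : ℝ) : exp z = 1 + z + phi z / 2 * z ^ 2 := by
  rcases eq_or_ne z 0 with rfl | hz
  · simp
  rw [phi_of_ne_zero hz]
  field_simp
  ring

lemma exp_le_one_add_add_phi_mul_sq {z b : ℝ} (hz : z ≤ b) :
    exp z ≤ 1 + z + phi b / 2 * z ^ 2 := by
  rw [exp_eq_one_add_add_phi_mul_sq z]
  gcongr
  exact monotone_phi hz

theorem stmt0_general {Ω : Type*} [MeasurableSpace Ω] (μ : Measure Ω) [IsProbabilityMeasure μ]
    (Z : Ω → ℝ) (b : ℝ)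
    (hZb : ∀ᵐ ω ∂μ, Z ω ≤ b)
    (hZint : Integrable Z μ) (hZ2int : Integrable (fun ω => (Z ω) ^ 2) μ) :
    ∫ ω, Real.exp (Z ω) ∂μ ≤
      Real.exp ((∫ ω, Z ω ∂μ) + phi b / 2 * ∫ ω, (Z ω) ^ 2 ∂μ) := by
  set c := phi b / 2
  have hlin_int : Integrable (fun ω => 1 + Z ω) μ := (integrable_const 1).add hZint
  have hquad_int : Integrable (fun ω => 1 + Z ω + c * Z ω ^ 2) μ :=
    hlin_int.add (hZ2int.const_mul c)
  have hbound : ∀ᵐ ω ∂μ, exp (Z ω) ≤ 1 + Z ω + c * Z ω ^ 2 := by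
    filter_upwards [hZb] with ω hω
    exact exp_le_one_add_add_phi_mul_sq hω
  have hexp_int : Integrable (fun ω => exp (Z ω)) μ := by
    refine hquad_int.mono' (continuous_exp.comp_aestronglyMeasurable hZint.1) ?_
    filter_upwards [hbound] with ω hω
    rwa [norm_of_nonneg (exp_pos _).le]
  calc ∫ ω, exp (Z ω) ∂μ ≤ ∫ ω, (1 + Z ω + c * Z ω ^ 2) ∂μ :=
        integral_mono_ae hexp_int hquad_int hbound
    _ = 1 + ((∫ ω, Z ω ∂μ) + c * ∫ ω, Z ω ^ 2 ∂μ) := by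
        rw [integral_add hlin_int (hZ2int.const_mul c),
          integral_add (integrable_const 1) hZint, integral_const, integral_const_mul]
        simp only [probReal_univ, one_smul]
        ring
    _ ≤ exp ((∫ ω, Z ω ∂μ) + c * ∫ ω, Z ω ^ 2 ∂μ) := by
        linarith [add_one_le_exp ((∫ ω, Z ω ∂μ) + c * ∫ ω, Z ω ^ 2 ∂μ)]

/-- If `Z` is a square-integrable random variable bounded above by `b > 0`, then
`E[e^Z] ≤ exp(E[Z] + (φ(b)/2) E[Z²])`. -/
theorem stmt0 {Ω : Type*} [MeasurableSpace Ω] (μ : Measure Ω) [IsProbabilityMeasure μ]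
    (Z : Ω → ℝ) (hZmeas : Measurable Z) (b : ℝ) (hb : 0 < b)
    (hZb : ∀ᵐ ω ∂μ, Z ω ≤ b)
    (hZint : Integrable Z μ) (hZ2int : Integrable (fun ω => (Z ω) ^ 2) μ) :
    ∫ ω, Real.exp (Z ω) ∂μ ≤
      Real.exp ((∫ ω, Z ω ∂μ) + phi b / 2 * ∫ ω, (Z ω) ^ 2 ∂μ) :=
  stmt0_general μ Z b hZb hZint hZ2int
end

section
/- Let Θ be a finite or countable set, π a probability measure on Θ with π(θ) > 0 for some θ, and ℓ : Θ → [0,∞) a function (thought of as θ ↦ ℓ(θ⋆,θ)). Define the probability measure π_X on Θ by π_X(θ) = e^{−ℓ(θ)}π(θ) / Σ_{θ'} e^{−ℓ(θ')}π(θ'). Then Σ_θ ℓ(θ) π_X(θ) ≤ inf_{θ ∈ Θ} [ ℓ(θ) + log(1/π(θ)) ]. -/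
open scoped BigOperators

/-- Gibbs posterior bound over an at most countable parameter set: the mean of the loss
under the Gibbs posterior is bounded by `ℓ(θ) + log(1/π(θ))` for every `θ` with `π(θ) > 0`. -/
theorem stmt2 {Θ : Type*} [Countable Θ] (π : Θ → ℝ) (ℓ : Θ → ℝ)
    (hπ : ∀ θ, 0 ≤ π θ) (hπ1 : ∑' θ, π θ = 1)
    (hℓ : ∀ θ, 0 ≤ ℓ θ)
    (Z : ℝ) (hZ : Z = ∑' θ, Real.exp (-ℓ θ) * π θ) (hZpos : 0 < Z)
    (hZsum : Summable (fun θ => Real.exp (-ℓ θ) * π θ))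
    (hsum : Summable (fun θ => ℓ θ * (Real.exp (-ℓ θ) * π θ / Z)))
    (θ₀ : Θ) (hθ₀ : 0 < π θ₀) :
    ∑' θ, ℓ θ * (Real.exp (-ℓ θ) * π θ / Z) ≤ ℓ θ₀ + Real.log (1 / π θ₀) := by
  have hπs : Summable π := by
    by_contra h
    rw [tsum_eq_zero_of_not_summable h] at hπ1
    norm_num at hπ1
  set t : ℝ := -Real.log Z with ht
  -- Step 1: the posterior mean is ≤ t = -log Z
  have hRsum : Summable (fun θ => (t - 1) * (Real.exp (-ℓ θ) * π θ / Z)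
      + Real.exp (-t) * π θ / Z) := by
    exact ((hZsum.div_const Z).mul_left (t - 1)).add
      ((hπs.mul_left (Real.exp (-t))).div_const Z)
  have step1 : ∑' θ, ℓ θ * (Real.exp (-ℓ θ) * π θ / Z) ≤ t := by
    have hpt : ∀ θ, ℓ θ * (Real.exp (-ℓ θ) * π θ / Z)
        ≤ (t - 1) * (Real.exp (-ℓ θ) * π θ / Z) + Real.exp (-t) * π θ / Z := by
      intro θ
      have hw : 0 ≤ Real.exp (-ℓ θ) * π θ / Z :=
        div_nonneg (mul_nonneg (Real.exp_pos _).le (hπ θ)) hZpos.le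
      have hx : ℓ θ ≤ t - 1 + Real.exp (ℓ θ - t) := by
        have := Real.add_one_le_exp (ℓ θ - t)
        linarith
      calc ℓ θ * (Real.exp (-ℓ θ) * π θ / Z)
          ≤ (t - 1 + Real.exp (ℓ θ - t)) * (Real.exp (-ℓ θ) * π θ / Z) :=
            mul_le_mul_of_nonneg_right hx hw
        _ = (t - 1) * (Real.exp (-ℓ θ) * π θ / Z)
            + (Real.exp (ℓ θ - t) * Real.exp (-ℓ θ)) * π θ / Z := by ring
        _ = (t - 1) * (Real.exp (-ℓ θ) * π θ / Z) + Real.exp (-t) * π θ / Z := by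
            rw [← Real.exp_add]; ring_nf
    have hle := Summable.tsum_le_tsum hpt hsum hRsum
    have htsumR : ∑' θ, ((t - 1) * (Real.exp (-ℓ θ) * π θ / Z)
        + Real.exp (-t) * π θ / Z) = t := by
      rw [Summable.tsum_add (((hZsum.div_const Z).mul_left (t - 1)))
        ((hπs.mul_left (Real.exp (-t))).div_const Z)]
      have h1 : ∑' θ, (t - 1) * (Real.exp (-ℓ θ) * π θ / Z) = t - 1 := by
        rw [tsum_mul_left, tsum_div_const, ← hZ, div_self hZpos.ne']
        ring
      have h2 : ∑' θ, Real.exp (-t) * π θ / Z = 1 := by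
        have : (fun θ => Real.exp (-t) * π θ / Z)
            = fun θ => (Real.exp (-t) / Z) * π θ := by
          funext θ; ring
        rw [this, tsum_mul_left, hπ1, ht, neg_neg, Real.exp_log hZpos,
          div_self hZpos.ne']
        ring
      rw [h1, h2]; ring
    linarith [htsumR ▸ hle]
  -- Step 2: t ≤ ℓ θ₀ + log (1 / π θ₀)
  have hZge : Real.exp (-ℓ θ₀) * π θ₀ ≤ Z := by
    rw [hZ]
    exact Summable.le_tsum hZsum θ₀ (fun θ _ => mul_nonneg (Real.exp_pos _).le (hπ θ))
  have hlog : Real.log (Real.exp (-ℓ θ₀) * π θ₀) ≤ Real.log Z :=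
    Real.log_le_log (mul_pos (Real.exp_pos _) hθ₀) hZge
  rw [Real.log_mul (Real.exp_pos _).ne' hθ₀.ne', Real.log_exp] at hlog
  have : Real.log (1 / π θ₀) = -Real.log (π θ₀) := by
    rw [one_div, Real.log_inv]
  linarith [step1]
end

section
/- Let (U,V) be a pair of random variables with values in a product measurable space E × F, with marginal distributions P_U and P_V. For every measurable function h on E × F (with the relevant expectations well-defined), E_U[ 1 / E_V[exp(−h(U,V))] ] ≤ ( E_V[ 1 / E_U[exp(h(U,V))] ] )^{−1}, where E_U denotes expectation over U ∼ P_U with V fixed and E_V expectation over V ∼ P_V with U fixed. -/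
/-!
For fixed `u`, Cauchy–Schwarz with the weight `e^{h(u,·)}` bounds
`B := ∫ (∫ e^{h} dμ)⁻¹ dν` by `B² ≤ (∫ b⁻² e^{h(u,·)} dν) · ∫ e^{-h(u,·)} dν`,
where `b(v) = ∫ e^{h(u,v)} dμ(u)`. Dividing by the last factor and integrating in `u`,
Tonelli turns the right-hand side into `∫ b⁻² b dν = B`, so `A · B² ≤ B` for the left-hand
side `A`.
Everything is done with lower Lebesgue integrals, where no integrability is needed.
-/

open MeasureTheory ENNReal

namespace ENNReal

theorem sq_lintegral_le_lintegral_sq_mul_mul_lintegral_inv {α : Type*} [MeasurableSpace α]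
    {μ : Measure α} {f w : α → ℝ≥0∞} (hf : AEMeasurable f μ) (hw : AEMeasurable w μ)
    (hw_ne_zero : ∀ x, w x ≠ 0) (hw_ne_top : ∀ x, w x ≠ ∞) :
    (∫⁻ x, f x ∂μ) ^ 2 ≤ (∫⁻ x, f x ^ 2 * w x ∂μ) * ∫⁻ x, (w x)⁻¹ ∂μ := by
  have hsqrt : ∀ x, (f x ^ 2 * w x) ^ (1 / 2 : ℝ) * (w x)⁻¹ ^ (1 / 2 : ℝ) = f x := fun x => by
    rw [← mul_rpow_of_nonneg _ _ (by norm_num), mul_assoc,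
      ENNReal.mul_inv_cancel (hw_ne_zero x) (hw_ne_top x), mul_one, ← rpow_natCast,
      ← rpow_mul]
    norm_num
  calc (∫⁻ x, f x ∂μ) ^ 2
      = (∫⁻ x, (f x ^ 2 * w x) ^ (1 / 2 : ℝ) * (w x)⁻¹ ^ (1 / 2 : ℝ) ∂μ) ^ 2 := by
        simp_rw [hsqrt]
    _ ≤ ((∫⁻ x, f x ^ 2 * w x ∂μ) ^ (1 / 2 : ℝ) * (∫⁻ x, (w x)⁻¹ ∂μ) ^ (1 / 2 : ℝ)) ^ 2 :=
        pow_le_pow_left' (lintegral_mul_norm_pow_le ((hf.pow_const 2).mul hw) hw.inv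
          (by norm_num) (by norm_num) (by norm_num)) 2
    _ = (∫⁻ x, f x ^ 2 * w x ∂μ) * ∫⁻ x, (w x)⁻¹ ∂μ := by
        rw [mul_pow, ← rpow_natCast, ← rpow_natCast, ← rpow_mul, ← rpow_mul]
        norm_num

variable {E F : Type*} [MeasurableSpace E] [MeasurableSpace F]
  {μ : Measure E} {ν : Measure F} [SFinite μ] [SFinite ν]

theorem lintegral_inv_lintegral_inv_le_inv {w : E × F → ℝ≥0∞} (hw : Measurable w)
    (hw_ne_zero : ∀ p, w p ≠ 0) (hw_ne_top : ∀ p, w p ≠ ∞)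
    (hB_ne_top : ∫⁻ v, (∫⁻ u, w (u, v) ∂μ)⁻¹ ∂ν ≠ ∞) :
    ∫⁻ u, (∫⁻ v, (w (u, v))⁻¹ ∂ν)⁻¹ ∂μ ≤ (∫⁻ v, (∫⁻ u, w (u, v) ∂μ)⁻¹ ∂ν)⁻¹ := by
  set a : E → ℝ≥0∞ := fun u => ∫⁻ v, (w (u, v))⁻¹ ∂ν
  set b : F → ℝ≥0∞ := fun v => ∫⁻ u, w (u, v) ∂μ
  set A := ∫⁻ u, (a u)⁻¹ ∂μ
  set B := ∫⁻ v, (b v)⁻¹ ∂ν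
  have hb : Measurable b := hw.lintegral_prod_left'
  have ha : Measurable a := hw.inv.lintegral_prod_right'
  have hw_prodMk_left : ∀ u, Measurable fun v => w (u, v) := fun _ =>
    hw.comp measurable_prodMk_left
  have hw_prodMk_right : ∀ v, Measurable fun u => w (u, v) := fun _ =>
    hw.comp measurable_prodMk_right
  have cauchy_schwarz : ∀ u, (a u)⁻¹ * B ^ 2 ≤ ∫⁻ v, (b v)⁻¹ ^ 2 * w (u, v) ∂ν := fun u =>
    calc (a u)⁻¹ * B ^ 2
        ≤ (a u)⁻¹ * ((∫⁻ v, (b v)⁻¹ ^ 2 * w (u, v) ∂ν) * a u) :=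
          mul_le_mul_right (sq_lintegral_le_lintegral_sq_mul_mul_lintegral_inv
            hb.inv.aemeasurable (hw_prodMk_left u).aemeasurable (fun _ => hw_ne_zero _)
            (fun _ => hw_ne_top _)) _
      _ = ((a u)⁻¹ * a u) * ∫⁻ v, (b v)⁻¹ ^ 2 * w (u, v) ∂ν := by ring
      _ ≤ ∫⁻ v, (b v)⁻¹ ^ 2 * w (u, v) ∂ν := mul_le_of_le_one_left' (ENNReal.inv_mul_le_one _)
  have tonelli : ∫⁻ u, ∫⁻ v, (b v)⁻¹ ^ 2 * w (u, v) ∂ν ∂μ ≤ B := by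
    rw [lintegral_lintegral_swap (((hb.inv.pow_const 2).comp measurable_snd).mul hw).aemeasurable]
    refine lintegral_mono fun v => ?_
    rw [lintegral_const_mul _ (hw_prodMk_right v)]
    calc (b v)⁻¹ ^ 2 * b v = (b v)⁻¹ * ((b v)⁻¹ * b v) := by ring
      _ ≤ (b v)⁻¹ := mul_le_of_le_one_right' (ENNReal.inv_mul_le_one _)
  have hAB : A * B * B ≤ 1 * B := by
    rw [one_mul, mul_assoc, ← sq, ← lintegral_mul_const (f := fun u => (a u)⁻¹) _ ha.inv]
    exact (lintegral_mono cauchy_schwarz).trans tonelli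
  rcases eq_or_ne B 0 with hB_zero | hB_ne_zero
  · simp [B, hB_zero]
  · exact ENNReal.le_inv_iff_mul_le.mpr ((ENNReal.mul_le_mul_iff_left hB_ne_zero hB_ne_top).mp hAB)

end ENNReal

namespace MeasureTheory

theorem ofReal_integral_inv_eq_lintegral_inv {α : Type*} [MeasurableSpace α] {μ : Measure α}
    {f : α → ℝ} (hf_pos : ∀ x, 0 < f x) (hf_inv : Integrable (fun x => (f x)⁻¹) μ) :
    ENNReal.ofReal (∫ x, (f x)⁻¹ ∂μ) = ∫⁻ x, (ENNReal.ofReal (f x))⁻¹ ∂μ := by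
  rw [ofReal_integral_eq_lintegral_ofReal hf_inv
    (Filter.Eventually.of_forall fun x => (inv_pos.2 (hf_pos x)).le)]
  exact lintegral_congr fun x => ENNReal.ofReal_inv_of_pos (hf_pos x)

theorem ofReal_integral_exp_eq_lintegral {α : Type*} [MeasurableSpace α] {μ : Measure α}
    {g : α → ℝ} (hg : Integrable (fun x => Real.exp (g x)) μ) :
    ENNReal.ofReal (∫ x, Real.exp (g x) ∂μ) = ∫⁻ x, ENNReal.ofReal (Real.exp (g x)) ∂μ :=
  ofReal_integral_eq_lintegral_ofReal hg (Filter.Eventually.of_forall fun _ => (Real.exp_pos _).le)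

end MeasureTheory

/-- Audibert–Catoni's lemma: for probability measures `μ` on `E`, `ν` on `F` and a
measurable function `h : E × F → ℝ` (with all the relevant integrals finite and positive),
`∫_E (∫_F e^{−h(u,v)} dν(v))⁻¹ dμ(u) ≤ (∫_F (∫_E e^{h(u,v)} dμ(u))⁻¹ dν(v))⁻¹`. -/
theorem stmt3 {E F : Type*} [MeasurableSpace E] [MeasurableSpace F]
    (μ : Measure E) (ν : Measure F) [IsProbabilityMeasure μ] [IsProbabilityMeasure ν]
    (h : E × F → ℝ) (hmeas : Measurable h)
    (hint1 : ∀ u, Integrable (fun v => Real.exp (-h (u, v))) ν)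
    (hint2 : Integrable (fun u => (∫ v, Real.exp (-h (u, v)) ∂ν)⁻¹) μ)
    (hint3 : ∀ v, Integrable (fun u => Real.exp (h (u, v))) μ)
    (hint4 : Integrable (fun v => (∫ u, Real.exp (h (u, v)) ∂μ)⁻¹) ν)
    (hpos : 0 < ∫ v, (∫ u, Real.exp (h (u, v)) ∂μ)⁻¹ ∂ν) :
    ∫ u, (∫ v, Real.exp (-h (u, v)) ∂ν)⁻¹ ∂μ ≤
      (∫ v, (∫ u, Real.exp (h (u, v)) ∂μ)⁻¹ ∂ν)⁻¹ := by
  set w : E × F → ℝ≥0∞ := fun p => ENNReal.ofReal (Real.exp (h p))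
  have hw_inv : ∀ p, (w p)⁻¹ = ENNReal.ofReal (Real.exp (-h p)) := fun p => by
    rw [Real.exp_neg, ENNReal.ofReal_inv_of_pos (Real.exp_pos _)]
  have hA : ENNReal.ofReal (∫ u, (∫ v, Real.exp (-h (u, v)) ∂ν)⁻¹ ∂μ) =
      ∫⁻ u, (∫⁻ v, (w (u, v))⁻¹ ∂ν)⁻¹ ∂μ := by
    simp_rw [ofReal_integral_inv_eq_lintegral_inv (fun u => integral_exp_pos (hint1 u)) hint2,
      ofReal_integral_exp_eq_lintegral (hint1 _), hw_inv]
  have hB : ENNReal.ofReal (∫ v, (∫ u, Real.exp (h (u, v)) ∂μ)⁻¹ ∂ν) =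
      ∫⁻ v, (∫⁻ u, w (u, v) ∂μ)⁻¹ ∂ν := by
    simp_rw [ofReal_integral_inv_eq_lintegral_inv (fun v => integral_exp_pos (hint3 v)) hint4,
      ofReal_integral_exp_eq_lintegral (hint3 _), w]
  have hle := lintegral_inv_lintegral_inv_le_inv (w := w)
    (Real.measurable_exp.comp hmeas).ennreal_ofReal
    (fun _ => ENNReal.ofReal_ne_zero_iff.mpr (Real.exp_pos _)) (fun _ => ENNReal.ofReal_ne_top)
    (hB ▸ ENNReal.ofReal_ne_top)
  rwa [← hA, ← hB, ← ENNReal.ofReal_inv_of_pos hpos,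
    ENNReal.ofReal_le_ofReal_iff (inv_nonneg.2 hpos.le)] at hle
end

section
/- Let Θ be a measurable space with a probability measure π and ℓ : Θ × Θ → [0,∞) a loss with measurable balls B(θ,r) = {θ' : ℓ(θ,θ') ≤ r}. Fix γ > 0 and θ ∈ Θ, and suppose r > 0 satisfies 0 < π(B(θ,2u)) ≤ e^{γu} π(B(θ,u)) for all u ≥ r, and additionally γ r ≥ 1. Then for every η > 0 and every integer J ≥ 0, ∫_{Θ \ B(θ, 2^J r)} exp(−(2+η)γ ℓ(θ,θ')) dπ(θ') ≤ (1 − e^{−η})^{−1} π(B(θ,r)) exp(−2^J η γ r). -/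
/-!
Split the complement of `B(θ, a)`, `a = 2^J r`, into the dyadic shells
`a 2^k < ℓ(θ, ·) ≤ a 2^(k+1)`. Iterating the doubling condition from `r` gives
`π(B(θ, 2^n r)) ≤ exp(γ r (2^n - 1)) π(B(θ, r))`, so the `k`-th shell contributes at most
`π(B(θ, r)) exp(γr (2^(J+k+1) - 1) - (2+η) γ r 2^(J+k))`; since `γ r ≥ 1` and `2^(J+k) - 2^J ≥ k`
this is at most `π(B(θ, r)) e^{-2^J ηγr} e^{-ηk}`, and the geometric series sums to the claim.
-/

open MeasureTheory Set

lemma iUnion_Ioc_two_pow_mul {a : ℝ} (ha : 0 < a) :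
    ⋃ k : ℕ, Ioc (2 ^ k * a) (2 ^ (k + 1) * a) = Ioi a := by
  have hmono : Monotone fun k : ℕ => (2 : ℝ) ^ k * a := fun _ _ hij =>
    mul_le_mul_of_nonneg_right (pow_le_pow_right₀ one_le_two hij) ha.le
  have hunbdd : ¬BddAbove (range fun k : ℕ => (2 : ℝ) ^ k * a) := by
    rw [not_bddAbove_iff]
    intro x
    obtain ⟨n, hn⟩ := pow_unbounded_of_one_lt (x / a) one_lt_two
    exact ⟨_, ⟨n, rfl⟩, (div_lt_iff₀ ha).1 hn⟩
  simpa using iUnion_Ioc_map_succ_eq_Ioi (fun k => hmono bot_le) hunbdd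

lemma pairwise_disjoint_Ioc_two_pow_mul {a : ℝ} (ha : 0 ≤ a) :
    Pairwise (Function.onFun Disjoint fun k : ℕ => Ioc (2 ^ k * a) (2 ^ (k + 1) * a)) := by
  have hmono : Monotone fun k : ℕ => (2 : ℝ) ^ k * a := fun _ _ hij =>
    mul_le_mul_of_nonneg_right (pow_le_pow_right₀ one_le_two hij) ha
  simpa using hmono.pairwise_disjoint_on_Ioc_succ

lemma le_exp_mul_of_doubling {V : ℝ → ℝ} {γ r : ℝ} (hr : 0 ≤ r)
    (hV : ∀ u ≥ r, V (2 * u) ≤ Real.exp (γ * u) * V u) (n : ℕ) :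
    V (2 ^ n * r) ≤ Real.exp (γ * r * (2 ^ n - 1)) * V r := by
  induction n with
  | zero => simp
  | succ n ih =>
    calc V (2 ^ (n + 1) * r) = V (2 * (2 ^ n * r)) := by ring_nf
      _ ≤ Real.exp (γ * (2 ^ n * r)) * V (2 ^ n * r) :=
        hV _ (le_mul_of_one_le_left hr (one_le_pow₀ one_le_two))
      _ ≤ Real.exp (γ * (2 ^ n * r)) * (Real.exp (γ * r * (2 ^ n - 1)) * V r) := by gcongr
      _ = Real.exp (γ * r * (2 ^ (n + 1) - 1)) * V r := by
        rw [← mul_assoc, ← Real.exp_add]; ring_nf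

lemma doubling_exponent_le {c η : ℝ} (hc : 1 ≤ c) (hη : 0 ≤ η) (J k : ℕ) :
    c * (2 ^ (J + k + 1) - 1) - (2 + η) * (2 ^ (J + k) * c) ≤ -(2 ^ J * η * c) - η * k := by
  have hk : (k : ℝ) + 1 ≤ 2 ^ k := by exact_mod_cast Nat.lt_two_pow_self
  have hJ : (1 : ℝ) ≤ 2 ^ J := one_le_pow₀ one_le_two
  have hgap : (k : ℝ) ≤ 2 ^ (J + k) - 2 ^ J := by
    rw [pow_add]; nlinarith
  have hgap_nonneg : (0 : ℝ) ≤ 2 ^ (J + k) - 2 ^ J := by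
    rw [pow_add]; nlinarith
  rw [pow_succ]
  nlinarith [mul_le_mul_of_nonneg_left hgap hη,
    mul_nonneg (mul_nonneg (sub_nonneg.2 hc) hη) hgap_nonneg]

section
variable {X : Type*} [MeasurableSpace X] (μ : Measure X) [IsFiniteMeasure μ] {g : X → ℝ} {b : ℝ}

lemma integrableOn_exp_neg_mul_compl_setOf_le (hg : Measurable g) (hb : 0 ≤ b) {a : ℝ}
    (ha : 0 ≤ a) : IntegrableOn (fun x => Real.exp (-(b * g x))) {x | g x ≤ a}ᶜ μ := by
  refine IntegrableOn.of_bound (measure_lt_top _ _)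
    (by fun_prop) 1 (ae_restrict_of_forall_mem (hg measurableSet_Iic).compl fun x hx => ?_)
  have hgx : 0 ≤ g x := ha.trans (le_of_lt (not_le.1 hx))
  rw [Real.norm_of_nonneg (Real.exp_pos _).le, Real.exp_le_one_iff]
  nlinarith

lemma setIntegral_exp_neg_mul_preimage_Ioc_le (hb : 0 ≤ b) (s t : ℝ) :
    ∫ x in g ⁻¹' Ioc s t, Real.exp (-(b * g x)) ∂μ ≤
      Real.exp (-(b * s)) * μ.real {x | g x ≤ t} := by
  calc _ ≤ ‖∫ x in g ⁻¹' Ioc s t, Real.exp (-(b * g x)) ∂μ‖ := Real.le_norm_self _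
    _ ≤ Real.exp (-(b * s)) * μ.real (g ⁻¹' Ioc s t) :=
      norm_setIntegral_le_of_norm_le_const (measure_lt_top _ _) fun x hx => by
        rw [Real.norm_of_nonneg (Real.exp_pos _).le, Real.exp_le_exp]
        nlinarith [hx.1]
    _ ≤ _ := by
      gcongr
      · exact measure_ne_top _ _
      · exact fun x hx => hx.2

lemma setIntegral_exp_neg_mul_dyadic_shell_le {γ r η : ℝ} (hr : 0 ≤ r) (hγr : 1 ≤ γ * r)
    (hη : 0 ≤ η)
    (hdouble : ∀ u ≥ r, μ.real {x | g x ≤ 2 * u} ≤ Real.exp (γ * u) * μ.real {x | g x ≤ u})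
    (J k : ℕ) :
    ∫ x in g ⁻¹' Ioc (2 ^ k * (2 ^ J * r)) (2 ^ (k + 1) * (2 ^ J * r)),
        Real.exp (-((2 + η) * γ * g x)) ∂μ ≤
      μ.real {x | g x ≤ r} * Real.exp (-(2 ^ J * η * γ * r)) * Real.exp (-η) ^ k := by
  set C := μ.real {x | g x ≤ r}
  have hb : 0 ≤ (2 + η) * γ := mul_nonneg (by linarith) (by nlinarith)
  have hball : 2 ^ (k + 1) * (2 ^ J * r) = 2 ^ (J + k + 1) * r := by ring
  have hexp := doubling_exponent_le hγr hη J k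
  calc _ ≤ Real.exp (-((2 + η) * γ * (2 ^ k * (2 ^ J * r)))) *
          μ.real {x | g x ≤ 2 ^ (k + 1) * (2 ^ J * r)} :=
        setIntegral_exp_neg_mul_preimage_Ioc_le μ hb _ _
    _ ≤ Real.exp (-((2 + η) * γ * (2 ^ k * (2 ^ J * r)))) *
          (Real.exp (γ * r * (2 ^ (J + k + 1) - 1)) * C) := by
        rw [hball]; gcongr
        exact le_exp_mul_of_doubling (V := fun u => μ.real {x | g x ≤ u}) hr hdouble _
    _ = C * Real.exp (γ * r * (2 ^ (J + k + 1) - 1) - (2 + η) * (2 ^ (J + k) * (γ * r))) := by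
        rw [show (2 + η) * γ * (2 ^ k * (2 ^ J * r)) = (2 + η) * (2 ^ (J + k) * (γ * r)) by ring,
          Real.exp_sub, Real.exp_neg]
        ring
    _ ≤ C * Real.exp (-(2 ^ J * η * γ * r) - η * k) := by
        gcongr C * Real.exp ?_; linarith
    _ = C * Real.exp (-(2 ^ J * η * γ * r)) * Real.exp (-η) ^ k := by
        rw [Real.exp_sub, Real.exp_neg η, inv_pow, ← Real.exp_nat_mul, mul_comm (k : ℝ)]
        ring

end

theorem stmt4_general {Θ : Type*} [MeasurableSpace Θ] (π : Measure Θ) [IsProbabilityMeasure π]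
    (ℓ : Θ → Θ → ℝ) (θ : Θ)
    (hmeas : Measurable (fun θ' => ℓ θ θ'))
    (γ r : ℝ) (hr : 0 < r) (hγr : 1 ≤ γ * r)
    (hdouble : ∀ u ≥ r,
      (π {θ' | ℓ θ θ' ≤ 2 * u}).toReal ≤ Real.exp (γ * u) * (π {θ' | ℓ θ θ' ≤ u}).toReal)
    (η : ℝ) (hη : 0 < η) (J : ℕ) :
    ∫ θ' in {θ' | ℓ θ θ' ≤ 2 ^ J * r}ᶜ, Real.exp (-((2 + η) * γ * ℓ θ θ')) ∂π ≤
      (1 - Real.exp (-η))⁻¹ * (π {θ' | ℓ θ θ' ≤ r}).toReal *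
        Real.exp (-(2 ^ J * η * γ * r)) := by
  set a : ℝ := 2 ^ J * r
  have ha : 0 < a := by positivity
  have hb : 0 ≤ (2 + η) * γ := mul_nonneg (by linarith) (by nlinarith)
  have hshells : {θ' | ℓ θ θ' ≤ a}ᶜ = ⋃ k : ℕ, ℓ θ ⁻¹' Ioc (2 ^ k * a) (2 ^ (k + 1) * a) := by
    rw [← preimage_iUnion, iUnion_Ioc_two_pow_mul ha]
    ext; simp
  have hsum := hasSum_integral_iUnion (μ := π) (f := fun θ' => Real.exp (-((2 + η) * γ * ℓ θ θ')))
    (fun _ => hmeas measurableSet_Ioc)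
    (fun _ _ hij => (pairwise_disjoint_Ioc_two_pow_mul ha.le hij).preimage _)
    (hshells ▸ integrableOn_exp_neg_mul_compl_setOf_le π hmeas hb ha.le)
  rw [← hshells] at hsum
  set C := (π {θ' | ℓ θ θ' ≤ r}).toReal
  have hgeom := (hasSum_geometric_of_lt_one (Real.exp_pos (-η)).le
    (Real.exp_lt_one_iff.2 (neg_lt_zero.2 hη))).mul_left (C * Real.exp (-(2 ^ J * η * γ * r)))
  calc _ ≤ C * Real.exp (-(2 ^ J * η * γ * r)) * (1 - Real.exp (-η))⁻¹ :=
        hasSum_le (setIntegral_exp_neg_mul_dyadic_shell_le π hr.le hγr hη.le hdouble J) hsum hgeom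
    _ = _ := by ring

/-- Tail integral bound under the doubling condition: if `π(B(θ,2u)) ≤ e^{γu} π(B(θ,u)) > 0`
for all `u ≥ r` and `γr ≥ 1`, then for every `η > 0` and integer `J ≥ 0`,
`∫_{B(θ,2^J r)ᶜ} exp(−(2+η)γ ℓ(θ,θ')) dπ ≤ (1 − e^{−η})⁻¹ π(B(θ,r)) e^{−2^J ηγr}`. -/
theorem stmt4 {Θ : Type*} [MeasurableSpace Θ] (π : Measure Θ) [IsProbabilityMeasure π]
    (ℓ : Θ → Θ → ℝ) (hℓ : ∀ θ θ', 0 ≤ ℓ θ θ') (θ : Θ)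
    (hmeas : Measurable (fun θ' => ℓ θ θ'))
    (γ r : ℝ) (hγ : 0 < γ) (hr : 0 < r) (hγr : 1 ≤ γ * r)
    (hpos : ∀ u ≥ r, 0 < (π {θ' | ℓ θ θ' ≤ u}).toReal)
    (hdouble : ∀ u ≥ r,
      (π {θ' | ℓ θ θ' ≤ 2 * u}).toReal ≤ Real.exp (γ * u) * (π {θ' | ℓ θ θ' ≤ u}).toReal)
    (η : ℝ) (hη : 0 < η) (J : ℕ) :
    ∫ θ' in {θ' | ℓ θ θ' ≤ 2 ^ J * r}ᶜ, Real.exp (-((2 + η) * γ * ℓ θ θ')) ∂π ≤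
      (1 - Real.exp (-η))⁻¹ * (π {θ' | ℓ θ θ' ≤ r}).toReal *
        Real.exp (-(2 ^ J * η * γ * r)) :=
  stmt4_general π ℓ θ hmeas γ r hr hγr hdouble η hη J
end

section
/- Let s⋆ be a unit vector in a real inner product space H, V a closed linear subspace of H, and S the unit sphere of V. Then inf_{s ∈ S} ‖s⋆ − s‖² ≤ 2 inf_{v ∈ V} ‖s⋆ − v‖². -/
/-!
Write `v ∈ V` as `a • w` with `w` a unit vector of `V`, and let `c = ⟪s⋆, w⟫`. Among `±w`, the one
making a nonnegative inner product with `s⋆` is at squared distance `2 (1 - |c|) ≤ 2 (1 - c²)`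
from `s⋆`, while `1 - c²` is the squared distance from `s⋆` to the line `ℝ w`, hence at most
`‖s⋆ - v‖²`.
-/

open RealInnerProductSpace

section

variable {H : Type*} [NormedAddCommGroup H] [InnerProductSpace ℝ H]

theorem norm_sq_sub_inner_sq_le_norm_sub_smul_sq (u : H) {w : H} (hw : ‖w‖ = 1) (a : ℝ) :
    ‖u‖ ^ 2 - ⟪u, w⟫ ^ 2 ≤ ‖u - a • w‖ ^ 2 := by
  have hexpand : ‖u - a • w‖ ^ 2 = ‖u‖ ^ 2 - ⟪u, w⟫ ^ 2 + (a - ⟪u, w⟫) ^ 2 := by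
    rw [norm_sub_sq_real, norm_smul, real_inner_smul_right, hw, Real.norm_eq_abs, mul_one, sq_abs]
    ring
  rw [hexpand]
  linarith [sq_nonneg (a - ⟪u, w⟫)]

theorem exists_neg_or_self_norm_sub_sq_le {u w : H} (hu : ‖u‖ = 1) (hw : ‖w‖ = 1) :
    ∃ s ∈ ({w, -w} : Set H), ‖u - s‖ ^ 2 ≤ 2 * (1 - ⟪u, w⟫ ^ 2) := by
  have hc : |⟪u, w⟫| ≤ 1 := by simpa [hu, hw] using abs_real_inner_le_norm u w
  have hc_sq : ⟪u, w⟫ ^ 2 ≤ |⟪u, w⟫| := by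
    rw [← sq_abs]; nlinarith [abs_nonneg ⟪u, w⟫]
  have hdist (s : H) (hs : ‖s‖ = 1) : ‖u - s‖ ^ 2 = 2 - 2 * ⟪u, s⟫ := by
    rw [norm_sub_sq_real, hu, hs]; ring
  rcases le_total 0 ⟪u, w⟫ with hpos | hneg
  · refine ⟨w, .inl rfl, ?_⟩
    rw [hdist w hw]
    rw [abs_of_nonneg hpos] at hc_sq
    linarith
  · refine ⟨-w, .inr rfl, ?_⟩
    rw [hdist (-w) (by rwa [norm_neg]), inner_neg_right]
    rw [abs_of_nonpos hneg] at hc_sq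
    linarith

theorem Submodule.exists_norm_eq_one_smul_eq {V : Submodule ℝ H} (hne : ∃ w ∈ V, ‖w‖ = 1)
    {v : H} (hv : v ∈ V) : ∃ w ∈ V, ‖w‖ = 1 ∧ v = ‖v‖ • w := by
  rcases eq_or_ne v 0 with rfl | hv0
  · obtain ⟨w, hwV, hw⟩ := hne
    exact ⟨w, hwV, hw, by simp⟩
  · have hv_pos : 0 < ‖v‖ := norm_pos_iff.mpr hv0
    refine ⟨‖v‖⁻¹ • v, V.smul_mem _ hv, ?_, ?_⟩
    · rw [norm_smul, norm_inv, norm_norm, inv_mul_cancel₀ hv_pos.ne']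
    · rw [smul_smul, mul_inv_cancel₀ hv_pos.ne', one_smul]

theorem Submodule.exists_norm_eq_one_norm_sub_sq_le {V : Submodule ℝ H}
    (hne : ∃ w ∈ V, ‖w‖ = 1) {u : H} (hu : ‖u‖ = 1) {v : H} (hv : v ∈ V) :
    ∃ s ∈ V, ‖s‖ = 1 ∧ ‖u - s‖ ^ 2 ≤ 2 * ‖u - v‖ ^ 2 := by
  obtain ⟨w, hwV, hw, hvw⟩ := V.exists_norm_eq_one_smul_eq hne hv
  obtain ⟨s, hs, hle⟩ := exists_neg_or_self_norm_sub_sq_le hu hw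
  have hline := norm_sq_sub_inner_sq_le_norm_sub_smul_sq u hw ‖v‖
  rw [hu, one_pow, ← hvw] at hline
  rcases hs with rfl | rfl
  · exact ⟨s, hwV, hw, by linarith⟩
  · exact ⟨-w, V.neg_mem hwV, by rwa [norm_neg], by linarith⟩

end

theorem stmt8_general {H : Type*} [NormedAddCommGroup H] [InnerProductSpace ℝ H]
    (V : Submodule ℝ H)
    (sstar : H) (hs : ‖sstar‖ = 1) (hne : ∃ v ∈ V, ‖v‖ = 1) :
    sInf ((fun s => ‖sstar - s‖ ^ 2) '' {v ∈ (V : Set H) | ‖v‖ = 1}) ≤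
      2 * sInf ((fun v => ‖sstar - v‖ ^ 2) '' (V : Set H)) := by
  have hbdd : BddBelow ((fun s => ‖sstar - s‖ ^ 2) '' {v ∈ (V : Set H) | ‖v‖ = 1}) :=
    ⟨0, by rintro _ ⟨_, _, rfl⟩; positivity⟩
  have hhalf : sInf ((fun s => ‖sstar - s‖ ^ 2) '' {v ∈ (V : Set H) | ‖v‖ = 1}) / 2 ≤
      sInf ((fun v => ‖sstar - v‖ ^ 2) '' (V : Set H)) := by
    refine le_csInf ⟨_, 0, V.zero_mem, rfl⟩ ?_
    rintro _ ⟨v, hv, rfl⟩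
    obtain ⟨s, hsV, hs1, hle⟩ := V.exists_norm_eq_one_norm_sub_sq_le hne hs hv
    have := csInf_le hbdd ⟨s, ⟨hsV, hs1⟩, rfl⟩
    linarith
  linarith

/-- If `s⋆` is a unit vector of a real inner product space and `S` is the unit sphere of a
closed subspace `V` (assumed nonempty), then `inf_{s∈S} ‖s⋆−s‖² ≤ 2 inf_{v∈V} ‖s⋆−v‖²`. -/
theorem stmt8 {H : Type*} [NormedAddCommGroup H] [InnerProductSpace ℝ H]
    (V : Submodule ℝ H) (hV : IsClosed (V : Set H))
    (sstar : H) (hs : ‖sstar‖ = 1) (hne : ∃ v ∈ V, ‖v‖ = 1) :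
    sInf ((fun s => ‖sstar - s‖ ^ 2) '' {v ∈ (V : Set H) | ‖v‖ = 1}) ≤
      2 * sInf ((fun v => ‖sstar - v‖ ^ 2) '' (V : Set H)) :=
  stmt8_general V sstar hs hne
end

section
/- For every z > 0 and s ∈ (0,1), z^{1−s} ≤ Γ(z+1)/Γ(z+s) ≤ (z+s)^{1−s} (Wendel's inequalities). -/
/-- Wendel's inequalities: for every `z > 0` and `s ∈ (0,1)`,
`z^(1−s) ≤ Γ(z+1)/Γ(z+s) ≤ (z+s)^(1−s)`. -/
theorem stmt11 (z s : ℝ) (hz : 0 < z) (hs : s ∈ Set.Ioo (0 : ℝ) 1) :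
    z ^ (1 - s) ≤ Real.Gamma (z + 1) / Real.Gamma (z + s) ∧
      Real.Gamma (z + 1) / Real.Gamma (z + s) ≤ (z + s) ^ (1 - s) := by
  obtain ⟨hs0, hs1⟩ := hs
  have hzs : 0 < z + s := by linarith
  have hΓz : 0 < Real.Gamma z := Real.Gamma_pos_of_pos hz
  have hΓzs : 0 < Real.Gamma (z + s) := Real.Gamma_pos_of_pos hzs
  have hΓz1 : 0 < Real.Gamma (z + 1) := Real.Gamma_pos_of_pos (by linarith)
  have hrec : Real.Gamma (z + 1) = z * Real.Gamma z := Real.Gamma_add_one hz.ne'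
  have hrec2 : Real.Gamma (z + s + 1) = (z + s) * Real.Gamma (z + s) :=
    Real.Gamma_add_one hzs.ne'
  constructor
  · -- Γ(z+s) ≤ Γ(z)^(1-s) * Γ(z+1)^s
    have h := Real.Gamma_mul_add_mul_le_rpow_Gamma_mul_rpow_Gamma hz (by linarith : (0:ℝ) < z + 1)
      (by linarith : (0:ℝ) < 1 - s) hs0 (by ring)
    have he : (1 - s) * z + s * (z + 1) = z + s := by ring
    rw [he] at h
    have hG : Real.Gamma z ^ (1 - s) * Real.Gamma (z + 1) ^ s
        = Real.Gamma (z + 1) / z ^ (1 - s) := by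
      have : Real.Gamma z = Real.Gamma (z + 1) / z := by rw [hrec]; field_simp
      rw [this, Real.div_rpow hΓz1.le hz.le,
        div_mul_eq_mul_div, ← Real.rpow_add hΓz1]
      norm_num
    rw [hG] at h
    rw [le_div_iff₀ hΓzs, mul_comm, ← le_div_iff₀ (Real.rpow_pos_of_pos hz _)]
    exact h
  · -- Γ(z+1) ≤ Γ(z+s)^s * Γ(z+s+1)^(1-s)
    have h := Real.Gamma_mul_add_mul_le_rpow_Gamma_mul_rpow_Gamma hzs
      (by linarith : (0:ℝ) < z + s + 1) hs0 (by linarith : (0:ℝ) < 1 - s) (by ring)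
    have he : s * (z + s) + (1 - s) * (z + s + 1) = z + 1 := by ring
    rw [he, hrec2, Real.mul_rpow hzs.le hΓzs.le, ← mul_assoc,
      mul_comm (Real.Gamma (z+s) ^ s), mul_assoc, ← Real.rpow_add hΓzs] at h
    norm_num at h
    rw [div_le_iff₀ hΓzs]
    linarith
end
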